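/- Let x be a vector of n ≥ 2 positive reals. Then for every k ≥ 2, e_k(x∪{a,b})·e_{k−1}(x) ≥ e_{k+1}(x∪{a,b})·e_{k−2}(x) for all nonnegative reals a, b, where x∪{a,b} denotes the vector of length n+2 obtained by appending a and b. -/

import Mathlib

/-!
Expanding `e_i(x ∪ {a, b})` in `a` and `b`, the inequality becomes a nonnegative combination of
the inequalities `e_{j+1}(x) e_m(x) ≤ e_j(x) e_{m+1}(x)` for `m ≤ j`. These are a weak form of
Newton's inequalities (without the binomial weights) that holds for every multiset of nonnegative
numbers; like the mixed inequality itself, they are proved by adjoining one element at a time.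
-/

open BigOperators

/-- The elementary symmetric polynomial of degree `k` in the entries of `x`. -/
noncomputable def esym {n : ℕ} (k : ℕ) (x : Fin n → ℝ) : ℝ :=
  ∑ S ∈ Finset.univ.powersetCard k, ∏ i ∈ S, x i

namespace Multiset

section CommSemiring

variable {R : Type*} [CommSemiring R]

theorem esymm_zero_right (s : Multiset R) : s.esymm 0 = 1 := by
  simp [esymm]

theorem esymm_cons_succ (a : R) (s : Multiset R) (k : ℕ) :
    (a ::ₘ s).esymm (k + 1) = s.esymm (k + 1) + a * s.esymm k := by
  rw [esymm, powersetCard_cons, map_add, sum_add, map_map]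
  congr 1
  rw [esymm, ← sum_map_mul_left]
  exact congrArg sum (map_congr rfl fun t _ => prod_cons a t)

end CommSemiring

section OrderedRing

variable {R : Type*} [CommRing R] [LinearOrder R] [IsStrictOrderedRing R]

theorem esymm_nonneg {s : Multiset R} (hs : ∀ r ∈ s, 0 ≤ r) (k : ℕ) : 0 ≤ s.esymm k :=
  sum_nonneg fun _ hp => by
    obtain ⟨t, ht, rfl⟩ := mem_map.mp hp
    exact prod_nonneg fun r hr => hs r (mem_of_le (mem_powersetCard.mp ht).1 hr)

theorem esymm_succ_mul_esymm_le {s : Multiset R} (hs : ∀ r ∈ s, 0 ≤ r) {m j : ℕ} (hmj : m ≤ j) :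
    s.esymm (j + 1) * s.esymm m ≤ s.esymm j * s.esymm (m + 1) := by
  induction s using Multiset.induction_on generalizing m j with
  | empty =>
    rw [esymm, powersetCard_zero_right, map_zero, sum_zero, zero_mul]
    exact mul_nonneg (esymm_nonneg hs _) (esymm_nonneg hs _)
  | cons a s ih =>
    have ha : 0 ≤ a := hs a (mem_cons_self a s)
    have hs : ∀ r ∈ s, 0 ≤ r := fun r hr => hs r (mem_cons_of_mem hr)
    have hf := esymm_nonneg hs
    rcases m with _ | m <;> rcases j with _ | j
    · exact (mul_comm _ _).le
    · have h := ih hs (Nat.zero_le (j + 1))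
      simp only [esymm_cons_succ, esymm_zero_right] at h ⊢
      nlinarith [mul_nonneg ha (mul_nonneg (hf j) (hf 1)), mul_nonneg (mul_self_nonneg a) (hf j)]
    · omega
    · have hmj : m ≤ j := Nat.succ_le_succ_iff.mp hmj
      -- the coefficient of `a` compares indices two apart, which needs two steps of the induction
      have gap : s.esymm (j + 2) * s.esymm m ≤ s.esymm j * s.esymm (m + 2) := by
        rcases hmj.lt_or_eq with hlt | rfl
        · exact (ih hs (hmj.trans j.le_succ)).trans (ih hs hlt)
        · exact (mul_comm _ _).le
      have h₁ := ih hs (Nat.succ_le_succ hmj)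
      have h₂ := ih hs hmj
      simp only [esymm_cons_succ]
      nlinarith [mul_le_mul_of_nonneg_left gap ha, mul_le_mul_of_nonneg_left h₂ (mul_self_nonneg a)]

theorem esymm_add_succ_mul_esymm_le {u s : Multiset R} (hu : ∀ r ∈ u, 0 ≤ r)
    (hs : ∀ r ∈ s, 0 ≤ r) {m j : ℕ} (hmj : m + card u ≤ j) :
    (u + s).esymm (j + 1) * s.esymm m ≤ (u + s).esymm j * s.esymm (m + 1) := by
  induction u using Multiset.induction_on generalizing j with
  | empty => simpa using esymm_succ_mul_esymm_le hs (by simpa using hmj)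
  | cons a u ih =>
    have hu' : ∀ r ∈ u, 0 ≤ r := fun r hr => hu r (mem_cons_of_mem hr)
    rw [card_cons] at hmj
    obtain ⟨j, rfl⟩ : ∃ j', j = j' + 1 := ⟨j - 1, by omega⟩
    have h₁ := ih hu' (j := j + 1) (by omega)
    have h₂ := ih hu' (j := j) (by omega)
    rw [cons_add, esymm_cons_succ, esymm_cons_succ]
    nlinarith [mul_le_mul_of_nonneg_left h₂ (hu a (mem_cons_self a u))]

end OrderedRing

end Multiset

theorem esym_eq_esymm {n : ℕ} (k : ℕ) (x : Fin n → ℝ) :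
    esym k x = (Finset.univ.val.map x).esymm k :=
  (Finset.esymm_map_val x Finset.univ k).symm

theorem Fin.univ_val_map_cons {α : Type*} {n : ℕ} (a : α) (x : Fin n → α) :
    Finset.univ.val.map (Fin.cons a x : Fin (n + 1) → α) = a ::ₘ Finset.univ.val.map x := by
  simp only [Fin.univ_val_map, List.ofFn_succ, Fin.cons_zero, Fin.cons_succ, Multiset.cons_coe]

theorem stmt_12_general (n : ℕ) (x : Fin n → ℝ) (hx : ∀ i, 0 < x i)
    (k : ℕ) (hk : 2 ≤ k) (a b : ℝ) (ha : 0 ≤ a) (hb : 0 ≤ b) :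
    esym (k + 1) (Fin.cons a (Fin.cons b x)) * esym (k - 2) x
      ≤ esym k (Fin.cons a (Fin.cons b x)) * esym (k - 1) x := by
  have hs : ∀ r ∈ Finset.univ.val.map x, 0 ≤ r := by
    simpa using fun i => (hx i).le
  have hab : ∀ r ∈ ({a, b} : Multiset ℝ), 0 ≤ r := by
    simpa using ⟨ha, hb⟩
  have key := Multiset.esymm_add_succ_mul_esymm_le hab hs (m := k - 2) (j := k) (by simp; omega)
  rw [show k - 2 + 1 = k - 1 by omega] at key
  simpa only [esym_eq_esymm, Fin.univ_val_map_cons, Multiset.insert_eq_cons, Multiset.cons_add,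
    Multiset.singleton_add] using key

/-- For a vector `x` of `n ≥ 2` positive reals, every `k ≥ 2`, and nonnegative reals
`a, b`: `e_k(x∪{a,b}) e_{k−1}(x) ≥ e_{k+1}(x∪{a,b}) e_{k−2}(x)`, where `x∪{a,b}` is the
vector of length `n+2` obtained by appending `a` and `b`. -/
theorem stmt_12 (n : ℕ) (hn : 2 ≤ n) (x : Fin n → ℝ) (hx : ∀ i, 0 < x i)
    (k : ℕ) (hk : 2 ≤ k) (a b : ℝ) (ha : 0 ≤ a) (hb : 0 ≤ b) :
    esym (k + 1) (Fin.cons a (Fin.cons b x)) * esym (k - 2) x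
      ≤ esym k (Fin.cons a (Fin.cons b x)) * esym (k - 1) x :=
  stmt_12_general n x hx k hk a b ha hb
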